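/- arXiv:2504.10927 — 6 statements merged into one kernel-verified Lean document; each statement's English description precedes it below -/
import Mathlib

section
/- Let V₁,...,Vₙ be subspaces of a vector space over an infinite field that form an independent family of sets (every Boolean combination ⋂_{i∈S} Vᵢ \ ⋃_{i∉S} Vᵢ is nonempty, witnessed by elements a_S). If W is another subspace such that a_S ∈ W for every S ⊆ {1,...,n} and W does not contain V₁ ∩ ⋯ ∩ Vₙ, then the family V₁,...,Vₙ,W is independent. -/
theorem stmt_2 (K₀ : Type*) [Field K₀] [Infinite K₀] (M : Type*) [AddCommGroup M]
    [Module K₀ M] (n : ℕ) (V : Fin n → Submodule K₀ M) (W : Submodule K₀ M)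
    (a : Set (Fin n) → M)
    (ha : ∀ (S : Set (Fin n)) (i : Fin n), a S ∈ V i ↔ i ∈ S)
    (haW : ∀ S : Set (Fin n), a S ∈ W)
    (hW : ¬ (⨅ i, V i) ≤ W) :
    ∀ (S : Set (Fin n)) (b : Bool), ∃ x : M,
      (∀ i : Fin n, x ∈ V i ↔ i ∈ S) ∧ (x ∈ W ↔ b = true) := by
  intro S b
  obtain ⟨w, hwV, hwW⟩ := SetLike.not_le_iff_exists.mp hW
  have hwVi : ∀ i, w ∈ V i := fun i => (Submodule.mem_iInf V).mp hwV i
  cases b with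
  | true => exact ⟨a S, ha S, by simp [haW S]⟩
  | false =>
    refine ⟨a S + w, fun i => ?_, ?_⟩
    · constructor
      · intro h
        have : a S ∈ V i := by
          have := (V i).sub_mem h (hwVi i); simpa using this
        exact (ha S i).mp this
      · intro h
        exact (V i).add_mem ((ha S i).mpr h) (hwVi i)
    · simp only [Bool.false_eq_true, iff_false]
      intro h
      exact hwW (by simpa using W.sub_mem h (haW S))
end

section
/- Let A be an integral domain with exactly two maximal ideals p and q such that every nonzero element of A is a product of an element outside p and an element outside q. Then A_p + A_q = Frac(A), i.e., every element of the fraction field is a sum of an element of the localization at p and an element of the localization at q. -/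
theorem stmt_10 (A : Type*) [CommRing A] [IsDomain A]
    (K : Type*) [Field K] [Algebra A K] [IsFractionRing A K]
    (p q : Ideal A) (hp : p.IsMaximal) (hq : q.IsMaximal) (hpq : p ≠ q)
    (honly : ∀ m : Ideal A, m.IsMaximal → m = p ∨ m = q)
    (hfac : ∀ b : A, b ≠ 0 → ∃ s t : A, s ∉ p ∧ t ∉ q ∧ b = s * t) :
    ∀ z : K,
      ∃ x ∈ {x : K | ∃ a s : A, s ∉ p ∧ algebraMap A K s * x = algebraMap A K a},
      ∃ y ∈ {y : K | ∃ a t : A, t ∉ q ∧ algebraMap A K t * y = algebraMap A K a},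
        z = x + y := by
  intro z
  obtain ⟨a, b, hb, rfl⟩ := IsFractionRing.div_surjective (A := A) z
  have hb0 : b ≠ 0 := nonZeroDivisors.ne_zero hb
  obtain ⟨s, t, hs, ht, rfl⟩ := hfac b hb0
  -- (s, t) = ⊤
  have hst : Ideal.span ({s, t} : Set A) = ⊤ := by
    by_contra h
    obtain ⟨m, hm, hle⟩ := Ideal.exists_le_maximal _ h
    have hsm : s ∈ m := hle (Ideal.subset_span (by simp))
    have htm : t ∈ m := hle (Ideal.subset_span (by simp))
    rcases honly m hm with rfl | rfl
    · exact hs hsm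
    · exact ht htm
  have h1 : (1 : A) ∈ Ideal.span ({s, t} : Set A) := hst ▸ Submodule.mem_top
  rw [Ideal.mem_span_pair] at h1
  obtain ⟨u, v, huv⟩ := h1
  have hs0 : s ≠ 0 := fun h => hs (h ▸ p.zero_mem)
  have ht0 : t ≠ 0 := fun h => ht (h ▸ q.zero_mem)
  have hS : algebraMap A K s ≠ 0 := by
    simpa using (map_ne_zero_iff _ (IsFractionRing.injective A K)).mpr hs0
  have hT : algebraMap A K t ≠ 0 := by
    simpa using (map_ne_zero_iff _ (IsFractionRing.injective A K)).mpr ht0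
  refine ⟨algebraMap A K (a * v) / algebraMap A K s, ⟨a * v, s, hs, by field_simp⟩,
    algebraMap A K (a * u) / algebraMap A K t, ⟨a * u, t, ht, by field_simp⟩, ?_⟩
  have key : algebraMap A K u * algebraMap A K s + algebraMap A K v * algebraMap A K t = 1 := by
    rw [← map_mul, ← map_mul, ← map_add, huv, map_one]
  push_cast [map_mul]
  field_simp
  linear_combination (- algebraMap A K a) * key
end

section
/- Let A be an integral domain with exactly two maximal ideals p, q satisfying (A\p)·(A\q) = A\{0}, and let K = Frac(A). Then for any α, β ∈ K×, 1 ∈ αA_p + βA_q, where A_p, A_q are the localizations viewed inside K. -/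
lemma bez_aux (A : Type*) [CommRing A] (p q : Ideal A)
    (honly : ∀ m : Ideal A, m.IsMaximal → m = p ∨ m = q)
    (s t : A) (hs : s ∉ p) (ht : t ∉ q) : ∃ u v : A, u * s + v * t = 1 := by
  have h : Ideal.span {s, t} = ⊤ := by
    by_contra h
    obtain ⟨m, hm, hle⟩ := Ideal.exists_le_maximal _ h
    rcases honly m hm with rfl | rfl
    · exact hs (hle (Ideal.subset_span (by simp)))
    · exact ht (hle (Ideal.subset_span (by simp)))
  have h1 : (1 : A) ∈ Ideal.span {s, t} := h ▸ trivial
  rwa [Ideal.mem_span_pair] at h1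

theorem stmt_12 (A : Type*) [CommRing A] [IsDomain A]
    (K : Type*) [Field K] [Algebra A K] [IsFractionRing A K]
    (p q : Ideal A) (hp : p.IsMaximal) (hq : q.IsMaximal) (hpq : p ≠ q)
    (honly : ∀ m : Ideal A, m.IsMaximal → m = p ∨ m = q)
    (hfac : ∀ b : A, b ≠ 0 → ∃ s t : A, s ∉ p ∧ t ∉ q ∧ b = s * t) :
    ∀ α β : K, α ≠ 0 → β ≠ 0 →
      ∃ x ∈ {x : K | ∃ a s : A, s ∉ p ∧ algebraMap A K s * x = algebraMap A K a},
      ∃ y ∈ {y : K | ∃ a t : A, t ∉ q ∧ algebraMap A K t * y = algebraMap A K a},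
        α * x + β * y = 1 := by
  intro α β hα hβ
  have hinj := IsFractionRing.injective A K
  obtain ⟨⟨a, b⟩, hab⟩ := IsLocalization.surj (nonZeroDivisors A) α
  obtain ⟨⟨c, d⟩, hcd⟩ := IsLocalization.surj (nonZeroDivisors A) β
  have hb0 : (b : A) ≠ 0 := nonZeroDivisors.coe_ne_zero b
  have hd0 : (d : A) ≠ 0 := nonZeroDivisors.coe_ne_zero d
  have hbK : algebraMap A K (b : A) ≠ 0 := (map_ne_zero_iff _ hinj).mpr hb0
  have hdK : algebraMap A K (d : A) ≠ 0 := (map_ne_zero_iff _ hinj).mpr hd0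
  have ha0 : a ≠ 0 := by
    intro h; rw [h, map_zero] at hab
    exact (mul_ne_zero hα hbK) hab
  have hc0 : c ≠ 0 := by
    intro h; rw [h, map_zero] at hcd
    exact (mul_ne_zero hβ hdK) hcd
  obtain ⟨sa, ta, hsa, hta, hfa⟩ := hfac a ha0
  obtain ⟨sb, tb, hsb, htb, hfb⟩ := hfac (b : A) hb0
  obtain ⟨sc, tc, hsc, htc, hfc⟩ := hfac c hc0
  obtain ⟨sd, td, hsd, htd, hfd⟩ := hfac (d : A) hd0
  have hsa0 : sa ≠ 0 := fun h => ha0 (by rw [hfa, h, zero_mul])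
  have htc0 : tc ≠ 0 := fun h => hc0 (by rw [hfc, h, mul_zero])
  have hsaK : algebraMap A K sa ≠ 0 := (map_ne_zero_iff _ hinj).mpr hsa0
  have htcK : algebraMap A K tc ≠ 0 := (map_ne_zero_iff _ hinj).mpr htc0
  obtain ⟨u, v, huv⟩ := bez_aux A p q honly sc ta hsc hta
  refine ⟨algebraMap A K (sb * tb * v) / algebraMap A K sa,
    ⟨sb * tb * v, sa, hsa, by field_simp⟩,
    algebraMap A K (sd * td * u) / algebraMap A K tc,
    ⟨sd * td * u, tc, htc, by field_simp⟩, ?_⟩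
  rw [hfa, hfb] at hab
  rw [hfc, hfd] at hcd
  have huv' : algebraMap A K (u * sc) + algebraMap A K (v * ta) = 1 := by
    rw [← map_add, huv, map_one]
  simp only [map_mul] at hab hcd huv' ⊢
  field_simp
  linear_combination (algebraMap A K tc * algebraMap A K v) * hab +
    (algebraMap A K sa * algebraMap A K u) * hcd +
    (algebraMap A K sa * algebraMap A K tc) * huv'
end

section
/- Let K be a field with two field topologies τ₁ and τ₂. Then τ₁ and τ₂ are independent (every nonempty τ₁-open set meets every nonempty τ₂-open set) if and only if for every τ₁-neighborhood U of 0 and every τ₂-neighborhood V of 0, we have 1 ∈ U + V. -/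
/-!
Independence only has to be tested on neighbourhoods. If `U`, `V` are neighbourhoods of `0` for
`τ₁`, `τ₂`, then `1 - V` is a `τ₂`-neighbourhood of `1`, and a point `u` of `U ∩ (1 - V)` gives
`u + (1 - u) = 1`. Conversely, for open `U ∋ a` and `V ∋ b`, pull `U` and `V` back to neighbourhoods
of `0` along `x ↦ a + (b - a) x` and `x ↦ b + (a - b) x`; when `u + v = 1` both maps send `u`,
resp. `v`, to the same point, which then lies in `U ∩ V`.
-/

open Topology

section

universe u

variable {R : Type u}

def TopologiesIndependent (τ₁ τ₂ : TopologicalSpace R) : Prop :=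
  ∀ U V : Set R, IsOpen[τ₁] U → IsOpen[τ₂] V → U.Nonempty → V.Nonempty → (U ∩ V).Nonempty

theorem TopologiesIndependent.inter_nonempty_of_mem_nhds {τ₁ τ₂ : TopologicalSpace R}
    (h : TopologiesIndependent τ₁ τ₂) {U V : Set R} {a b : R}
    (hU : U ∈ @nhds R τ₁ a) (hV : V ∈ @nhds R τ₂ b) : (U ∩ V).Nonempty := by
  obtain ⟨U', hU'U, hU', haU'⟩ := (@mem_nhds_iff R τ₁ a U).1 hU
  obtain ⟨V', hV'V, hV', hbV'⟩ := (@mem_nhds_iff R τ₂ b V).1 hV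
  exact (h U' V' hU' hV' ⟨a, haU'⟩ ⟨b, hbV'⟩).mono (Set.inter_subset_inter hU'U hV'V)

theorem TopologiesIndependent.exists_add_eq [AddCommGroup R] {τ₁ τ₂ : TopologicalSpace R}
    (h₂ : @IsTopologicalAddGroup R τ₂ _) (h : TopologiesIndependent τ₁ τ₂) {U V : Set R}
    (hU : U ∈ @nhds R τ₁ 0) (hV : V ∈ @nhds R τ₂ 0) (w : R) : ∃ u ∈ U, ∃ v ∈ V, u + v = w := by
  have hW : (w - ·) ⁻¹' V ∈ @nhds R τ₂ w :=
    (continuous_const.sub continuous_id).tendsto' w 0 (sub_self w) hV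
  obtain ⟨u, hu, hwu⟩ := h.inter_nonempty_of_mem_nhds hU hW
  exact ⟨u, hu, w - u, hwu, add_sub_cancel u w⟩

theorem preimage_const_add_mul_mem_nhds_zero [Ring R] [TopologicalSpace R] [IsTopologicalRing R]
    {U : Set R} {a : R} (hU : U ∈ 𝓝 a) (c : R) : (a + c * ·) ⁻¹' U ∈ 𝓝 0 :=
  (continuous_const.add (continuous_const_mul c)).tendsto' 0 a (by simp) hU

theorem topologiesIndependent_of_exists_add_eq_one [Ring R] {τ₁ τ₂ : TopologicalSpace R}
    (h₁ : @IsTopologicalRing R τ₁ _) (h₂ : @IsTopologicalRing R τ₂ _)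
    (h : ∀ U ∈ @nhds R τ₁ 0, ∀ V ∈ @nhds R τ₂ 0, ∃ u ∈ U, ∃ v ∈ V, u + v = 1) :
    TopologiesIndependent τ₁ τ₂ := by
  rintro U V hU hV ⟨a, ha⟩ ⟨b, hb⟩
  have hU₀ := @preimage_const_add_mul_mem_nhds_zero R _ τ₁ h₁ _ _
    (@IsOpen.mem_nhds R τ₁ _ _ hU ha) (b - a)
  have hV₀ := @preimage_const_add_mul_mem_nhds_zero R _ τ₂ h₂ _ _
    (@IsOpen.mem_nhds R τ₂ _ _ hV hb) (a - b)
  obtain ⟨u, hu, v, hv, huv⟩ := h _ hU₀ _ hV₀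
  have hmeet : a + (b - a) * u = b + (a - b) * v := by
    rw [eq_sub_of_add_eq huv]
    noncomm_ring
  exact ⟨a + (b - a) * u, hu, hmeet ▸ hv⟩

end

theorem stmt_14_general (K : Type*) [Field K] (τ₁ τ₂ : TopologicalSpace K)
    (hring₁ : @IsTopologicalRing K τ₁ _) (hring₂ : @IsTopologicalRing K τ₂ _) :
    (∀ U V : Set K, @IsOpen K τ₁ U → @IsOpen K τ₂ V → U.Nonempty → V.Nonempty →
        (U ∩ V).Nonempty) ↔
    (∀ U ∈ @nhds K τ₁ 0, ∀ V ∈ @nhds K τ₂ 0, ∃ u ∈ U, ∃ v ∈ V, u + v = 1) :=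
  ⟨fun h _ hU _ hV => TopologiesIndependent.exists_add_eq inferInstance h hU hV 1,
    topologiesIndependent_of_exists_add_eq_one hring₁ hring₂⟩

theorem stmt_14 (K : Type*) [Field K] (τ₁ τ₂ : TopologicalSpace K)
    (hring₁ : @IsTopologicalRing K τ₁ _) (hring₂ : @IsTopologicalRing K τ₂ _)
    (hinv₁ : ∀ x : K, x ≠ 0 → @ContinuousAt K K τ₁ τ₁ (fun y => y⁻¹) x)
    (hinv₂ : ∀ x : K, x ≠ 0 → @ContinuousAt K K τ₂ τ₂ (fun y => y⁻¹) x)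
    (ht2₁ : @T2Space K τ₁) (ht2₂ : @T2Space K τ₂)
    (hnd₁ : τ₁ ≠ ⊥) (hnd₂ : τ₂ ≠ ⊥) :
    (∀ U V : Set K, @IsOpen K τ₁ U → @IsOpen K τ₂ V → U.Nonempty → V.Nonempty →
        (U ∩ V).Nonempty) ↔
    (∀ U ∈ @nhds K τ₁ 0, ∀ V ∈ @nhds K τ₂ 0, ∃ u ∈ U, ∃ v ∈ V, u + v = 1) :=
  stmt_14_general K τ₁ τ₂ hring₁ hring₂
end

section
/- Let τ₁, τ₂ be two independent topologies on a field K (every nonempty τ₁-open meets every nonempty τ₂-open), each Hausdorff with no isolated points. Then the join topology τ₁ ⊔ τ₂ is not discrete. -/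
lemma stmt_15_aux {K : Type*} [τ : TopologicalSpace K] [T2Space K] (x : K)
    (h : (nhdsWithin x {x}ᶜ).NeBot) {A : Set K} (hA : A ∈ nhds x) :
    ∃ W : Set K, IsOpen W ∧ W ⊆ A ∩ {x}ᶜ ∧ W.Nonempty := by
  obtain ⟨U, hUA, hUopen, hUx⟩ := mem_nhds_iff.mp hA
  refine ⟨U ∩ {x}ᶜ, hUopen.inter isOpen_compl_singleton,
    fun y hy => ⟨hUA hy.1, hy.2⟩, ?_⟩
  exact Filter.nonempty_of_mem (Filter.inter_mem
    (mem_nhdsWithin_of_mem_nhds (hUopen.mem_nhds hUx)) self_mem_nhdsWithin)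

theorem stmt_15 (K : Type*) [Field K] (τ₁ τ₂ : TopologicalSpace K)
    (ht2₁ : @T2Space K τ₁) (ht2₂ : @T2Space K τ₂)
    (hiso₁ : ∀ x : K, (@nhdsWithin K τ₁ x {x}ᶜ).NeBot)
    (hiso₂ : ∀ x : K, (@nhdsWithin K τ₂ x {x}ᶜ).NeBot)
    (hindep : ∀ U V : Set K, @IsOpen K τ₁ U → @IsOpen K τ₂ V → U.Nonempty →
        V.Nonempty → (U ∩ V).Nonempty) :
    TopologicalSpace.generateFrom {s : Set K | @IsOpen K τ₁ s ∨ @IsOpen K τ₂ s} ≠ ⊥ := by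
  have hset : {s : Set K | @IsOpen K τ₁ s ∨ @IsOpen K τ₂ s}
      = {s | @IsOpen K τ₁ s} ∪ {s | @IsOpen K τ₂ s} := rfl
  rw [hset, generateFrom_union_isOpen]
  intro h
  have h0 : ({(0 : K)} : Set K) ∈ @nhds K (τ₁ ⊓ τ₂) 0 := by
    rw [h, @nhds_discrete K ⊥ (@DiscreteTopology.mk K ⊥ rfl)]
    exact Filter.mem_pure.mpr rfl
  rw [@nhds_inf K τ₁ τ₂ 0, Filter.mem_inf_iff] at h0
  obtain ⟨A, hA, B, hB, hAB⟩ := h0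
  obtain ⟨U, hUopen, hUsub, hUne⟩ := @stmt_15_aux K τ₁ ht2₁ 0 (hiso₁ 0) A hA
  obtain ⟨V, hVopen, hVsub, hVne⟩ := @stmt_15_aux K τ₂ ht2₂ 0 (hiso₂ 0) B hB
  obtain ⟨y, hyU, hyV⟩ := hindep U V hUopen hVopen hUne hVne
  exact (hUsub hyU).2 (hAB ▸ Set.mem_inter (hUsub hyU).1 (hVsub hyV).1)
end

section
/- Let R be an integral domain with fraction field K ≠ R, and suppose the Jacobson radical of R is nonzero. Then inversion is continuous at 1 for the R-adic topology: for every nonzero ideal I of R there is a nonzero ideal I' of R such that every x ∈ 1 + I' is a unit of K with x⁻¹ ∈ 1 + I. -/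
theorem stmt_19 (R : Type*) [CommRing R] [IsDomain R]
    (K : Type*) [Field K] [Algebra R K] [IsFractionRing R K]
    (hne : ¬ Function.Surjective (algebraMap R K))
    (hJ : Ideal.jacobson (⊥ : Ideal R) ≠ ⊥) :
    ∀ I : Ideal R, I ≠ ⊥ → ∃ I' : Ideal R, I' ≠ ⊥ ∧
      ∀ x : K, (∃ a ∈ I', x = 1 + algebraMap R K a) →
        x ≠ 0 ∧ ∃ b ∈ I, x⁻¹ = 1 + algebraMap R K b := by
  intro I hI
  refine ⟨I ⊓ Ideal.jacobson ⊥, ?_, ?_⟩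
  · -- product of nonzero elements lies in the intersection
    obtain ⟨i, hiI, hi0⟩ := Submodule.exists_mem_ne_zero_of_ne_bot hI
    obtain ⟨j, hjJ, hj0⟩ := Submodule.exists_mem_ne_zero_of_ne_bot hJ
    intro hbot
    have : i * j ∈ I ⊓ Ideal.jacobson ⊥ :=
      ⟨Ideal.mul_mem_right _ _ hiI, Ideal.mul_mem_left _ _ hjJ⟩
    rw [hbot, Ideal.mem_bot] at this
    exact mul_ne_zero hi0 hj0 this
  · rintro x ⟨a, ⟨haI, haJ⟩, rfl⟩
    have hunit : IsUnit (1 + a) := by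
      have := (Ideal.mem_jacobson_bot.mp haJ) 1
      simpa [add_comm] using this
    obtain ⟨u, hu⟩ := hunit
    have hne0 : (1 : R) + a ≠ 0 := by
      rw [← hu]; exact u.ne_zero
    have hx : (1 : K) + algebraMap R K a = algebraMap R K (1 + a) := by
      simp [map_add]
    constructor
    · rw [hx]
      exact fun h => hne0 ((IsFractionRing.injective R K) (by simpa using h))
    · refine ⟨-(a * ↑u⁻¹), I.neg_mem (Ideal.mul_mem_right _ _ haI), ?_⟩
      have h1 : (1 + a) * (↑u⁻¹ : R) = 1 := by rw [← hu]; exact u.mul_inv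
      have hinv : (1 + algebraMap R K a)⁻¹ = algebraMap R K ↑u⁻¹ := by
        rw [hx]
        exact inv_eq_of_mul_eq_one_left (by rw [← map_mul, mul_comm, h1, map_one])
      rw [hinv]
      have h2 : (↑u⁻¹ : R) = 1 + -(a * ↑u⁻¹) := by linear_combination h1
      conv_lhs => rw [h2, map_add, map_one]
end
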